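/- arXiv:1606.02027 — 5 statements merged into one kernel-verified Lean document; each statement's English description precedes it below -/
import Mathlib

section
/- Let H be a complex Hilbert space, let Φ = (φ_1, …, φ_N) be a frame for H with frame bounds 0 < A ≤ B, and let μ be a real number with 0 < μ < √A. If Ψ = (ψ_1, …, ψ_N) is a μ-perturbation of Φ, then Ψ is also a frame for H, with frame bounds A·(1 − μ/√A)² and B·(1 + μ/√B)²; that is, for all x ∈ H, A·(1 − μ/√A)²·‖x‖² ≤ Σ_{i=1}^N |⟨x, ψ_i⟩|² ≤ B·(1 + μ/√B)²·‖x‖². -/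
/-!
The analysis map `T_Φ x = (⟪x, φ i⟫)ᵢ ∈ ℓ²` satisfies `‖T_Φ x‖² = ∑ i, ‖⟪x, φ i⟫‖²`, so the frame
bounds say `√A ‖x‖ ≤ ‖T_Φ x‖ ≤ √B ‖x‖`. The perturbation hypothesis bounds the synthesis map
`c ↦ ∑ cᵢ (φᵢ - ψᵢ)` by `μ`, hence by duality `‖T_Φ x - T_Ψ x‖ ≤ μ ‖x‖`, and the triangle
inequality gives `(√A - μ) ‖x‖ ≤ ‖T_Ψ x‖ ≤ (√B + μ) ‖x‖`.
-/

open scoped ComplexInnerProductSpace InnerProductSpace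

section Analysis

variable {𝕜 H ι : Type*} [RCLike 𝕜] [SeminormedAddCommGroup H] [InnerProductSpace 𝕜 H]

variable (𝕜) in
noncomputable def analysisMap (φ : ι → H) (x : H) : EuclideanSpace 𝕜 ι :=
  WithLp.toLp 2 fun i => ⟪x, φ i⟫_𝕜

theorem norm_analysisMap_sq [Fintype ι] (φ : ι → H) (x : H) :
    ‖analysisMap 𝕜 φ x‖ ^ 2 = ∑ i, ‖⟪x, φ i⟫_𝕜‖ ^ 2 :=
  EuclideanSpace.norm_sq_eq _

theorem analysisMap_sub (φ ψ : ι → H) (x : H) :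
    analysisMap 𝕜 φ x - analysisMap 𝕜 ψ x = analysisMap 𝕜 (φ - ψ) x := by
  ext i
  simp [analysisMap, inner_sub_right]

/-- The analysis map is adjoint to the synthesis map `c ↦ ∑ i, c i • d i`; testing the bound on
`c = conj (analysisMap d x)` gives `‖analysisMap d x‖² ≤ ‖x‖ μ ‖analysisMap d x‖`. -/
theorem norm_analysisMap_le_of_norm_synthesis_le [Fintype ι] {d : ι → H} {μ : ℝ} (hμ : 0 ≤ μ)
    (hd : ∀ c : ι → 𝕜, ‖∑ i, c i • d i‖ ≤ μ * √(∑ i, ‖c i‖ ^ 2)) (x : H) :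
    ‖analysisMap 𝕜 d x‖ ≤ μ * ‖x‖ := by
  set a := analysisMap 𝕜 d x
  set c : ι → 𝕜 := fun i => starRingEnd 𝕜 (a i)
  have hc : √(∑ i, ‖c i‖ ^ 2) = ‖a‖ := by
    simp only [c, RCLike.norm_conj, EuclideanSpace.norm_eq]
  have hinner : ⟪x, ∑ i, c i • d i⟫_𝕜 = (‖a‖ ^ 2 : ℝ) := by
    rw [inner_sum, EuclideanSpace.norm_sq_eq]
    push_cast
    exact Finset.sum_congr rfl fun i _ => by rw [inner_smul_right]; exact RCLike.conj_mul _
  have hsq : ‖a‖ * ‖a‖ ≤ μ * ‖x‖ * ‖a‖ :=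
    calc ‖a‖ * ‖a‖ = ‖⟪x, ∑ i, c i • d i⟫_𝕜‖ := by
          rw [hinner, RCLike.norm_ofReal, abs_of_nonneg (by positivity), sq]
      _ ≤ ‖x‖ * ‖∑ i, c i • d i‖ := norm_inner_le_norm _ _
      _ ≤ ‖x‖ * (μ * ‖a‖) := by rw [← hc]; gcongr; exact hd c
      _ = μ * ‖x‖ * ‖a‖ := by ring
  rcases (norm_nonneg a).eq_or_lt with ha | ha
  · rw [← ha]
    positivity
  · exact le_of_mul_le_mul_right hsq ha

end Analysis

section NormBounds

variable {E : Type*} [SeminormedAddCommGroup E] {u v : E} {a μ r : ℝ}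

theorem sq_sub_mul_sq_le_norm_sq_of_norm_sub_le (ha : 0 ≤ a) (hμ : μ ≤ √a) (hr : 0 ≤ r)
    (hu : a * r ^ 2 ≤ ‖u‖ ^ 2) (huv : ‖u - v‖ ≤ μ * r) : (√a - μ) ^ 2 * r ^ 2 ≤ ‖v‖ ^ 2 := by
  have hu' : √a * r ≤ ‖u‖ := by
    rwa [← sq_le_sq₀ (by positivity) (norm_nonneg u), mul_pow, Real.sq_sqrt ha]
  have hv : (√a - μ) * r ≤ ‖v‖ := by
    linarith [norm_le_norm_add_norm_sub' u v]
  rw [← mul_pow]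
  exact pow_le_pow_left₀ (mul_nonneg (sub_nonneg.2 hμ) hr) hv 2

theorem norm_sq_le_sq_add_mul_sq_of_norm_sub_le (ha : 0 ≤ a) (hr : 0 ≤ r)
    (hu : ‖u‖ ^ 2 ≤ a * r ^ 2) (huv : ‖u - v‖ ≤ μ * r) : ‖v‖ ^ 2 ≤ (√a + μ) ^ 2 * r ^ 2 := by
  have hu' : ‖u‖ ≤ √a * r := by
    rwa [← sq_le_sq₀ (norm_nonneg u) (by positivity), mul_pow, Real.sq_sqrt ha]
  have hv : ‖v‖ ≤ (√a + μ) * r := by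
    linarith [norm_le_norm_add_norm_sub u v]
  rw [← mul_pow]
  exact pow_le_pow_left₀ (norm_nonneg v) hv 2

end NormBounds

theorem mul_one_sub_div_sqrt_sq {a : ℝ} (ha : 0 < a) (μ : ℝ) :
    a * (1 - μ / √a) ^ 2 = (√a - μ) ^ 2 := by
  field_simp
  rw [Real.sq_sqrt ha.le]

theorem mul_one_add_div_sqrt_sq {a : ℝ} (ha : 0 < a) (μ : ℝ) :
    a * (1 + μ / √a) ^ 2 = (√a + μ) ^ 2 := by
  field_simp
  rw [Real.sq_sqrt ha.le]

theorem perturbation_of_frame_is_frame_general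
    {H : Type*} [NormedAddCommGroup H] [InnerProductSpace ℂ H]
    {N : ℕ} (φ ψ : Fin N → H) (A B μ : ℝ) (hA : 0 < A) (hAB : A ≤ B)
    (hframe : ∀ x : H, A * ‖x‖ ^ 2 ≤ ∑ i, ‖⟪x, φ i⟫‖ ^ 2 ∧
      ∑ i, ‖⟪x, φ i⟫‖ ^ 2 ≤ B * ‖x‖ ^ 2)
    (hμ : 0 < μ) (hμA : μ < Real.sqrt A)
    (hpert : ∀ c : Fin N → ℂ,
      ‖∑ i, c i • (φ i - ψ i)‖ ≤ μ * Real.sqrt (∑ i, ‖c i‖ ^ 2)) :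
    ∀ x : H, A * (1 - μ / Real.sqrt A) ^ 2 * ‖x‖ ^ 2 ≤ ∑ i, ‖⟪x, ψ i⟫‖ ^ 2 ∧
      ∑ i, ‖⟪x, ψ i⟫‖ ^ 2 ≤ B * (1 + μ / Real.sqrt B) ^ 2 * ‖x‖ ^ 2 := by
  intro x
  have hB : 0 < B := hA.trans_le hAB
  have hdiff : ‖analysisMap ℂ φ x - analysisMap ℂ ψ x‖ ≤ μ * ‖x‖ := by
    rw [analysisMap_sub]
    exact norm_analysisMap_le_of_norm_synthesis_le hμ.le hpert x
  simp only [← norm_analysisMap_sq (𝕜 := ℂ)] at hframe ⊢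
  rw [mul_one_sub_div_sqrt_sq hA, mul_one_add_div_sqrt_sq hB]
  exact ⟨sq_sub_mul_sq_le_norm_sq_of_norm_sub_le hA.le hμA.le (norm_nonneg x) (hframe x).1 hdiff,
    norm_sq_le_sq_add_mul_sq_of_norm_sub_le hB.le (norm_nonneg x) (hframe x).2 hdiff⟩

/-- If `Φ` is a frame for a complex Hilbert space `H` with frame
bounds `0 < A ≤ B`, `0 < μ < √A`, and `Ψ` is a `μ`-perturbation of `Φ`, then `Ψ` is
a frame for `H` with bounds `A(1 - μ/√A)²` and `B(1 + μ/√B)²`. -/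
theorem perturbation_of_frame_is_frame
    {H : Type*} [NormedAddCommGroup H] [InnerProductSpace ℂ H] [CompleteSpace H]
    {N : ℕ} (φ ψ : Fin N → H) (A B μ : ℝ) (hA : 0 < A) (hAB : A ≤ B)
    (hframe : ∀ x : H, A * ‖x‖ ^ 2 ≤ ∑ i, ‖⟪x, φ i⟫‖ ^ 2 ∧
      ∑ i, ‖⟪x, φ i⟫‖ ^ 2 ≤ B * ‖x‖ ^ 2)
    (hμ : 0 < μ) (hμA : μ < Real.sqrt A)
    (hpert : ∀ c : Fin N → ℂ,
      ‖∑ i, c i • (φ i - ψ i)‖ ≤ μ * Real.sqrt (∑ i, ‖c i‖ ^ 2)) :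
    ∀ x : H, A * (1 - μ / Real.sqrt A) ^ 2 * ‖x‖ ^ 2 ≤ ∑ i, ‖⟪x, ψ i⟫‖ ^ 2 ∧
      ∑ i, ‖⟪x, ψ i⟫‖ ^ 2 ≤ B * (1 + μ / Real.sqrt B) ^ 2 * ‖x‖ ^ 2 :=
  perturbation_of_frame_is_frame_general φ ψ A B μ hA hAB hframe hμ hμA hpert
end

section
/- Let H be a finite-dimensional complex Hilbert space and let W_1, …, W_N be closed subspaces of H forming a fusion frame for H (with all weights equal to 1) with bounds 0 < A ≤ B. Let μ > 0 satisfy √A − μ√N > 0, and let V_1, …, V_N be closed subspaces of H such that ‖P_{W_i}(x) − P_{V_i}(x)‖ ≤ μ‖x‖ for every x ∈ H and every i = 1, …, N (where P_U denotes the orthogonal projection onto U). Then V_1, …, V_N is a fusion frame for H with bounds (√A − μ√N)² and (√B + μ√N)²; that is, for all x ∈ H, (√A − μ√N)²·‖x‖² ≤ Σ_{i=1}^N ‖P_{V_i}(x)‖² ≤ (√B + μ√N)²·‖x‖². -/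
/-!
Let `T_W x = (P_{W_i} x)_i` be the analysis map into the `ℓ²`-sum of `N` copies of `H`, so
that the fusion frame inequalities say `√A ‖x‖ ≤ ‖T_W x‖ ≤ √B ‖x‖`. The perturbation hypothesis
bounds every coordinate of `T_W x - T_V x` by `μ ‖x‖`, hence `‖T_W x - T_V x‖ ≤ μ √N ‖x‖`, and the
reverse triangle inequality moves the two bounds from `T_W x` to `T_V x`.
-/

open Real

theorem Real.sqrt_mul_le_of_mul_sq_le {a s t : ℝ} (hs : 0 ≤ s) (ht : 0 ≤ t)
    (h : a * t ^ 2 ≤ s ^ 2) : √a * t ≤ s :=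
  calc √a * t = √(a * t ^ 2) := by rw [sqrt_mul' a (sq_nonneg t), sqrt_sq ht]
    _ ≤ √(s ^ 2) := sqrt_le_sqrt h
    _ = s := sqrt_sq hs

theorem Real.le_sqrt_mul_of_sq_le_mul_sq {b s t : ℝ} (ht : 0 ≤ t) (h : s ^ 2 ≤ b * t ^ 2) :
    s ≤ √b * t :=
  calc s ≤ |s| := le_abs_self s
    _ ≤ √(b * t ^ 2) := abs_le_sqrt h
    _ = √b * t := by rw [sqrt_mul' b (sq_nonneg t), sqrt_sq ht]

theorem PiLp.norm_le_sqrt_card_mul_of_forall_norm_le {ι : Type*} [Fintype ι] {β : ι → Type*}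
    [∀ i, SeminormedAddCommGroup (β i)] (f : PiLp 2 β) {c : ℝ} (h : ∀ i, ‖f i‖ ≤ c) :
    ‖f‖ ≤ √(Fintype.card ι) * c := by
  cases isEmpty_or_nonempty ι with
  | inl _ => simp [Subsingleton.elim f 0]
  | inr hι =>
    have hc : 0 ≤ c := (norm_nonneg _).trans (h hι.some)
    rw [PiLp.norm_eq_of_L2, ← sqrt_sq hc, ← sqrt_mul (Nat.cast_nonneg _)]
    refine sqrt_le_sqrt ?_
    calc ∑ i, ‖f i‖ ^ 2 ≤ ∑ _i : ι, c ^ 2 :=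
          Finset.sum_le_sum fun i _ => pow_le_pow_left₀ (norm_nonneg _) (h i) 2
      _ = Fintype.card ι * c ^ 2 := by simp

section FusionAnalysis

variable {𝕜 H ι : Type*} [RCLike 𝕜] [NormedAddCommGroup H] [InnerProductSpace 𝕜 H]

noncomputable def fusionAnalysis (W : ι → Submodule 𝕜 H) [∀ i, (W i).HasOrthogonalProjection]
    (x : H) : PiLp 2 (fun _ : ι => H) :=
  WithLp.toLp 2 fun i => ((W i).orthogonalProjectionOnto x : H)

variable [Fintype ι] (W V : ι → Submodule 𝕜 H) [∀ i, (W i).HasOrthogonalProjection]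
  [∀ i, (V i).HasOrthogonalProjection]

theorem sq_norm_fusionAnalysis (x : H) :
    ‖fusionAnalysis W x‖ ^ 2 = ∑ i, ‖((W i).orthogonalProjectionOnto x : H)‖ ^ 2 :=
  PiLp.norm_sq_eq_of_L2 _ _

theorem norm_fusionAnalysis_sub_le {μ : ℝ} (x : H)
    (h : ∀ i, ‖((W i).orthogonalProjectionOnto x : H) - ((V i).orthogonalProjectionOnto x : H)‖ ≤ μ * ‖x‖) :
    ‖fusionAnalysis W x - fusionAnalysis V x‖ ≤ μ * √(Fintype.card ι) * ‖x‖ := by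
  rw [mul_right_comm]
  exact (PiLp.norm_le_sqrt_card_mul_of_forall_norm_le _ h).trans_eq (by ring)

end FusionAnalysis

theorem perturbation_of_fusion_frame_is_fusion_frame_general
    {H : Type*} [NormedAddCommGroup H] [InnerProductSpace ℂ H] [FiniteDimensional ℂ H]
    {N : ℕ} (W V : Fin N → Submodule ℂ H) (A B μ : ℝ)
    (hframe : ∀ x : H,
      A * ‖x‖ ^ 2 ≤ ∑ i, ‖(Submodule.orthogonalProjection (W i) x : H)‖ ^ 2 ∧
        ∑ i, ‖(Submodule.orthogonalProjection (W i) x : H)‖ ^ 2 ≤ B * ‖x‖ ^ 2)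
    (hμN : 0 < Real.sqrt A - μ * Real.sqrt N)
    (hpert : ∀ i, ∀ x : H,
      ‖(Submodule.orthogonalProjection (W i) x : H) - (Submodule.orthogonalProjection (V i) x : H)‖ ≤ μ * ‖x‖) :
    ∀ x : H,
      (Real.sqrt A - μ * Real.sqrt N) ^ 2 * ‖x‖ ^ 2 ≤
          ∑ i, ‖(Submodule.orthogonalProjection (V i) x : H)‖ ^ 2 ∧
        ∑ i, ‖(Submodule.orthogonalProjection (V i) x : H)‖ ^ 2 ≤
          (Real.sqrt B + μ * Real.sqrt N) ^ 2 * ‖x‖ ^ 2 := by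
  intro x
  have hW_lower : √A * ‖x‖ ≤ ‖fusionAnalysis W x‖ :=
    sqrt_mul_le_of_mul_sq_le (norm_nonneg _) (norm_nonneg x)
      ((sq_norm_fusionAnalysis W x).symm ▸ (hframe x).1)
  have hW_upper : ‖fusionAnalysis W x‖ ≤ √B * ‖x‖ :=
    le_sqrt_mul_of_sq_le_mul_sq (norm_nonneg x)
      ((sq_norm_fusionAnalysis W x).symm ▸ (hframe x).2)
  have hWV : ‖fusionAnalysis W x - fusionAnalysis V x‖ ≤ μ * √N * ‖x‖ := by
    simpa only [Fintype.card_fin] using norm_fusionAnalysis_sub_le W V x (hpert · x)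
  obtain ⟨hV_lower, hV_upper⟩ :=
    abs_le.mp ((abs_norm_sub_norm_le (fusionAnalysis W x) (fusionAnalysis V x)).trans hWV)
  rw [← sq_norm_fusionAnalysis V x, ← mul_pow, ← mul_pow]
  exact ⟨pow_le_pow_left₀ (by positivity) (by linarith) 2,
    pow_le_pow_left₀ (norm_nonneg _) (by linarith) 2⟩

/-- If `W₁, …, W_N` is a fusion frame (all weights 1) for a
finite-dimensional complex Hilbert space `H` with bounds `0 < A ≤ B`,
`μ > 0` satisfies `√A - μ√N > 0`, and `V₁, …, V_N` are closed subspaces with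
`‖P_{Wᵢ} x - P_{Vᵢ} x‖ ≤ μ‖x‖` for all `x` and `i`, then `V₁, …, V_N` is a
fusion frame with bounds `(√A - μ√N)²` and `(√B + μ√N)²`. -/
theorem perturbation_of_fusion_frame_is_fusion_frame
    {H : Type*} [NormedAddCommGroup H] [InnerProductSpace ℂ H] [FiniteDimensional ℂ H]
    {N : ℕ} (W V : Fin N → Submodule ℂ H) (A B μ : ℝ) (hA : 0 < A) (hAB : A ≤ B)
    (hframe : ∀ x : H,
      A * ‖x‖ ^ 2 ≤ ∑ i, ‖(Submodule.orthogonalProjection (W i) x : H)‖ ^ 2 ∧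
        ∑ i, ‖(Submodule.orthogonalProjection (W i) x : H)‖ ^ 2 ≤ B * ‖x‖ ^ 2)
    (hμ : 0 < μ) (hμN : 0 < Real.sqrt A - μ * Real.sqrt N)
    (hpert : ∀ i, ∀ x : H,
      ‖(Submodule.orthogonalProjection (W i) x : H) - (Submodule.orthogonalProjection (V i) x : H)‖ ≤ μ * ‖x‖) :
    ∀ x : H,
      (Real.sqrt A - μ * Real.sqrt N) ^ 2 * ‖x‖ ^ 2 ≤
          ∑ i, ‖(Submodule.orthogonalProjection (V i) x : H)‖ ^ 2 ∧
        ∑ i, ‖(Submodule.orthogonalProjection (V i) x : H)‖ ^ 2 ≤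
          (Real.sqrt B + μ * Real.sqrt N) ^ 2 * ‖x‖ ^ 2 :=
  perturbation_of_fusion_frame_is_fusion_frame_general W V A B μ hframe hμN hpert
end

section
/- Let H be a finite-dimensional complex Hilbert space with dim H ≥ 1, let W_1, …, W_N be closed subspaces of H forming a fusion frame for H (weights all 1), and let V_1, …, V_N be closed subspaces of H such that ‖P_{W_i}(x) − P_{V_i}(x)‖ ≤ μ‖x‖ for every x ∈ H and every i, where μ > 0 satisfies √(R_W^−) − μ√N > 0. Then V_1, …, V_N is a fusion frame for H and its lower redundancy satisfies R_V^− ≥ (√(R_W^−) − μ√N)². -/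
/-!
Let `a_W(x) = (‖P_{W_i} x‖)_i ∈ ℓ²(N)`, so that `R_W(x) = ‖a_W(x)‖²`. Each coordinate of
`a_W(x) - a_V(x)` is at most `μ‖x‖` in absolute value, hence `‖a_W(x) - a_V(x)‖ ≤ μ√N‖x‖`, and the
reverse triangle inequality in `ℓ²` gives `√R_V(x) ≥ √R_W(x) - μ√N‖x‖ ≥ (√R_W⁻ - μ√N)‖x‖`.
The upper frame bound `N` is automatic, since projections do not increase norms.
-/

open Finset

lemma sqrt_sum_sq_sub_sqrt_sum_sq_le {ι : Type*} [Fintype ι] (a b : ι → ℝ) {ε : ℝ}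
    (hε : 0 ≤ ε) (hab : ∀ i, |a i - b i| ≤ ε) :
    √(∑ i, a i ^ 2) - √(∑ i, b i ^ 2) ≤ √(Fintype.card ι) * ε := by
  have htri := norm_sub_norm_le (WithLp.toLp 2 a : EuclideanSpace ℝ ι) (WithLp.toLp 2 b)
  simp only [EuclideanSpace.norm_eq, ← WithLp.toLp_sub, Real.norm_eq_abs, sq_abs,
    Pi.sub_apply] at htri
  calc √(∑ i, a i ^ 2) - √(∑ i, b i ^ 2) ≤ √(∑ i, (a i - b i) ^ 2) := htri
    _ ≤ √(∑ _i : ι, ε ^ 2) := Real.sqrt_le_sqrt <| sum_le_sum fun i _ ↦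
      sq_le_sq' (abs_le.1 (hab i)).1 (abs_le.1 (hab i)).2
    _ = √(Fintype.card ι) * ε := by
      rw [sum_const, card_univ, nsmul_eq_mul, Real.sqrt_mul (Nat.cast_nonneg _), Real.sqrt_sq hε]

namespace FusionFrame

variable {𝕜 E ι : Type*} [RCLike 𝕜] [NormedAddCommGroup E] [InnerProductSpace 𝕜 E] [Fintype ι]
  (W : ι → Submodule 𝕜 E) [∀ i, (W i).HasOrthogonalProjection]

/-- The paper's `R_W`, extended from the unit sphere to a quadratic form on all of `E`. -/
noncomputable def redundancy (x : E) : ℝ := ∑ i, ‖((W i).orthogonalProjectionOnto x : E)‖ ^ 2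

noncomputable def lowerRedundancy : ℝ := ⨅ x : {x : E // ‖x‖ = 1}, redundancy W x

lemma redundancy_nonneg (x : E) : 0 ≤ redundancy W x := by
  unfold redundancy
  positivity

lemma redundancy_smul (c : 𝕜) (x : E) : redundancy W (c • x) = ‖c‖ ^ 2 * redundancy W x := by
  simp only [redundancy, map_smul, Submodule.coe_smul, norm_smul, mul_pow, mul_sum]

lemma redundancy_le_card_mul (x : E) : redundancy W x ≤ Fintype.card ι * ‖x‖ ^ 2 := by
  calc redundancy W x ≤ ∑ _i : ι, ‖x‖ ^ 2 := sum_le_sum fun i _ ↦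
        pow_le_pow_left₀ (norm_nonneg _) ((W i).norm_orthogonalProjectionOnto_apply_le x) 2
    _ = Fintype.card ι * ‖x‖ ^ 2 := by rw [sum_const, card_univ, nsmul_eq_mul]

lemma lowerRedundancy_mul_norm_sq_le (x : E) : lowerRedundancy W * ‖x‖ ^ 2 ≤ redundancy W x := by
  rcases eq_or_ne x 0 with rfl | hx
  · simp [redundancy_nonneg]
  let u : {x : E // ‖x‖ = 1} := ⟨(‖x‖⁻¹ : 𝕜) • x, norm_smul_inv_norm hx⟩
  have hxu : (‖x‖ : 𝕜) • (u : E) = x := by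
    simp [u, smul_smul, hx]
  have hle : lowerRedundancy W ≤ redundancy W u :=
    ciInf_le ⟨0, by rintro _ ⟨y, rfl⟩; exact redundancy_nonneg W y⟩ u
  calc lowerRedundancy W * ‖x‖ ^ 2 ≤ redundancy W u * ‖x‖ ^ 2 := by gcongr
    _ = redundancy W ((‖x‖ : 𝕜) • (u : E)) := by
      rw [redundancy_smul W (‖x‖ : 𝕜) u, RCLike.norm_ofReal, abs_norm, mul_comm]
    _ = redundancy W x := by rw [hxu]

lemma sqrt_redundancy_sub_sqrt_redundancy_le {V : ι → Submodule 𝕜 E}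
    [∀ i, (V i).HasOrthogonalProjection] {μ : ℝ} (hμ : 0 ≤ μ)
    (hpert : ∀ i x, ‖((W i).orthogonalProjectionOnto x : E) - (V i).orthogonalProjectionOnto x‖
      ≤ μ * ‖x‖) (x : E) :
    √(redundancy W x) - √(redundancy V x) ≤ μ * √(Fintype.card ι) * ‖x‖ := by
  have := sqrt_sum_sq_sub_sqrt_sum_sq_le (fun i ↦ ‖((W i).orthogonalProjectionOnto x : E)‖)
    (fun i ↦ ‖((V i).orthogonalProjectionOnto x : E)‖) (by positivity)
    fun i ↦ (abs_norm_sub_norm_le _ _).trans (hpert i x)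
  unfold redundancy
  linarith

lemma sq_mul_norm_sq_le_redundancy_of_perturbation {V : ι → Submodule 𝕜 E}
    [∀ i, (V i).HasOrthogonalProjection] {μ : ℝ} (hμ : 0 ≤ μ)
    (hpert : ∀ i x, ‖((W i).orthogonalProjectionOnto x : E) - (V i).orthogonalProjectionOnto x‖
      ≤ μ * ‖x‖)
    (hc : 0 ≤ √(lowerRedundancy W) - μ * √(Fintype.card ι)) (x : E) :
    (√(lowerRedundancy W) - μ * √(Fintype.card ι)) ^ 2 * ‖x‖ ^ 2 ≤ redundancy V x := by
  have hW : √(lowerRedundancy W) * ‖x‖ ≤ √(redundancy W x) := by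
    rw [← Real.sqrt_sq (norm_nonneg x), ← Real.sqrt_mul' _ (sq_nonneg _)]
    exact Real.sqrt_le_sqrt (lowerRedundancy_mul_norm_sq_le W x)
  have hV : (√(lowerRedundancy W) - μ * √(Fintype.card ι)) * ‖x‖ ≤ √(redundancy V x) := by
    linarith [sqrt_redundancy_sub_sqrt_redundancy_le W hμ hpert x]
  rw [← mul_pow]
  exact (Real.le_sqrt (mul_nonneg hc (norm_nonneg x)) (redundancy_nonneg V x)).1 hV

end FusionFrame

theorem lower_redundancy_of_perturbed_fusion_frame_general
    {H : Type*} [NormedAddCommGroup H] [InnerProductSpace ℂ H] [FiniteDimensional ℂ H]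
    (hdim : 1 ≤ Module.finrank ℂ H)
    {N : ℕ} (W V : Fin N → Submodule ℂ H) (μ : ℝ)
    (hμ : 0 < μ)
    (hμR : 0 < Real.sqrt (⨅ x : {x : H // ‖x‖ = 1},
      ∑ i, ‖((W i).orthogonalProjectionOnto (x : H) : H)‖ ^ 2) - μ * Real.sqrt N)
    (hpert : ∀ i, ∀ x : H,
      ‖((W i).orthogonalProjectionOnto x : H) - ((V i).orthogonalProjectionOnto x : H)‖ ≤ μ * ‖x‖) :
    (∃ A B : ℝ, 0 < A ∧ A ≤ B ∧ ∀ x : H,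
      A * ‖x‖ ^ 2 ≤ ∑ i, ‖((V i).orthogonalProjectionOnto x : H)‖ ^ 2 ∧
        ∑ i, ‖((V i).orthogonalProjectionOnto x : H)‖ ^ 2 ≤ B * ‖x‖ ^ 2) ∧
    (Real.sqrt (⨅ x : {x : H // ‖x‖ = 1},
          ∑ i, ‖((W i).orthogonalProjectionOnto (x : H) : H)‖ ^ 2) - μ * Real.sqrt N) ^ 2 ≤
      ⨅ x : {x : H // ‖x‖ = 1}, ∑ i, ‖((V i).orthogonalProjectionOnto (x : H) : H)‖ ^ 2 := by
  have : Nontrivial H := Module.nontrivial_of_finrank_pos hdim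
  obtain ⟨y, hy⟩ := exists_norm_eq H zero_le_one
  have : Nonempty {x : H // ‖x‖ = 1} := ⟨⟨y, hy⟩⟩
  change 0 < √(FusionFrame.lowerRedundancy W) - μ * √N at hμR
  have hlow (x : H) : (√(FusionFrame.lowerRedundancy W) - μ * √N) ^ 2 * ‖x‖ ^ 2 ≤
      FusionFrame.redundancy V x := by
    simpa using FusionFrame.sq_mul_norm_sq_le_redundancy_of_perturbation W hμ.le hpert
      (by simpa using hμR.le) x
  have hup (x : H) : FusionFrame.redundancy V x ≤ N * ‖x‖ ^ 2 := by
    simpa using FusionFrame.redundancy_le_card_mul V x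
  refine ⟨⟨_, N, by positivity, ?_, fun x ↦ ⟨hlow x, hup x⟩⟩, le_ciInf fun x ↦ ?_⟩
  · simpa [hy] using (hlow y).trans (hup y)
  · have h := hlow x
    rwa [x.2, one_pow, mul_one] at h

/-- If `W₁, …, W_N` is a fusion frame (weights all 1) for a
finite-dimensional complex Hilbert space `H` (`dim H ≥ 1`), and `V₁, …, V_N` are
closed subspaces with `‖P_{Wᵢ} x - P_{Vᵢ} x‖ ≤ μ‖x‖` for all `x` and `i`, where
`μ > 0` satisfies `√(R_W⁻) - μ√N > 0`, then `V₁, …, V_N` is a fusion frame for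
`H` and `R_V⁻ ≥ (√(R_W⁻) - μ√N)²`. -/
theorem lower_redundancy_of_perturbed_fusion_frame
    {H : Type*} [NormedAddCommGroup H] [InnerProductSpace ℂ H] [FiniteDimensional ℂ H]
    (hdim : 1 ≤ Module.finrank ℂ H)
    {N : ℕ} (W V : Fin N → Submodule ℂ H) (μ : ℝ)
    (hframe : ∃ A B : ℝ, 0 < A ∧ A ≤ B ∧ ∀ x : H,
      A * ‖x‖ ^ 2 ≤ ∑ i, ‖((W i).orthogonalProjectionOnto x : H)‖ ^ 2 ∧
        ∑ i, ‖((W i).orthogonalProjectionOnto x : H)‖ ^ 2 ≤ B * ‖x‖ ^ 2)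
    (hμ : 0 < μ)
    (hμR : 0 < Real.sqrt (⨅ x : {x : H // ‖x‖ = 1},
      ∑ i, ‖((W i).orthogonalProjectionOnto (x : H) : H)‖ ^ 2) - μ * Real.sqrt N)
    (hpert : ∀ i, ∀ x : H,
      ‖((W i).orthogonalProjectionOnto x : H) - ((V i).orthogonalProjectionOnto x : H)‖ ≤ μ * ‖x‖) :
    (∃ A B : ℝ, 0 < A ∧ A ≤ B ∧ ∀ x : H,
      A * ‖x‖ ^ 2 ≤ ∑ i, ‖((V i).orthogonalProjectionOnto x : H)‖ ^ 2 ∧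
        ∑ i, ‖((V i).orthogonalProjectionOnto x : H)‖ ^ 2 ≤ B * ‖x‖ ^ 2) ∧
    (Real.sqrt (⨅ x : {x : H // ‖x‖ = 1},
          ∑ i, ‖((W i).orthogonalProjectionOnto (x : H) : H)‖ ^ 2) - μ * Real.sqrt N) ^ 2 ≤
      ⨅ x : {x : H // ‖x‖ = 1}, ∑ i, ‖((V i).orthogonalProjectionOnto (x : H) : H)‖ ^ 2 :=
  lower_redundancy_of_perturbed_fusion_frame_general hdim W V μ hμ hμR hpert
end

section
/- Let H be a finite-dimensional complex Hilbert space with dim H ≥ 1, let W_1, …, W_N be closed subspaces of H forming a fusion frame for H (weights all 1), and let V_1, …, V_N be closed subspaces of H such that ‖P_{W_i}(x) − P_{V_i}(x)‖ ≤ μ‖x‖ for every x ∈ H and every i, where μ > 0. Then the upper redundancy of V = (V_1, …, V_N) satisfies R_V^+ ≤ (√(R_W^+) + μ√N)². -/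
/-!
For a unit vector `x`, write `P_{Vᵢ} x = P_{Wᵢ} x + (P_{Vᵢ} x - P_{Wᵢ} x)` and apply the triangle
inequality in `ℓ²(Fin N; H)`: the square root of the redundancy of `V` at `x` is at most that of
`W` plus the `ℓ²`-norm of the perturbation, which is at most `μ √N`. Taking suprema over the unit
sphere gives the bound.
-/

open Finset

section Minkowski

variable {ι : Type*} [Fintype ι] {β : ι → Type*} [∀ i, SeminormedAddCommGroup (β i)]

theorem sqrt_sum_norm_add_sq_le (u v : ∀ i, β i) :
    √(∑ i, ‖u i + v i‖ ^ 2) ≤ √(∑ i, ‖u i‖ ^ 2) + √(∑ i, ‖v i‖ ^ 2) := by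
  simpa only [PiLp.norm_eq_of_L2, PiLp.add_apply] using
    norm_add_le (WithLp.toLp 2 u) (WithLp.toLp 2 v)

theorem sqrt_sum_norm_sq_le_of_norm_le (v : ∀ i, β i) {c : ℝ} (hc : 0 ≤ c)
    (hv : ∀ i, ‖v i‖ ≤ c) : √(∑ i, ‖v i‖ ^ 2) ≤ c * √(Fintype.card ι) := by
  calc √(∑ i, ‖v i‖ ^ 2) ≤ √(∑ _i : ι, c ^ 2) := by gcongr with i; exact hv i
    _ = c * √(Fintype.card ι) := by
      rw [sum_const, card_univ, nsmul_eq_mul, Real.sqrt_mul (Nat.cast_nonneg _),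
        Real.sqrt_sq hc, mul_comm]

end Minkowski

section Redundancy

variable {𝕜 E ι : Type*} [RCLike 𝕜] [NormedAddCommGroup E] [InnerProductSpace 𝕜 E] [Fintype ι]

noncomputable def fusionRedundancy (W : ι → Submodule 𝕜 E) [∀ i, (W i).HasOrthogonalProjection]
    (x : E) : ℝ :=
  ∑ i, ‖((W i).orthogonalProjectionOnto x : E)‖ ^ 2

theorem fusionRedundancy_nonneg (W : ι → Submodule 𝕜 E) [∀ i, (W i).HasOrthogonalProjection]
    (x : E) : 0 ≤ fusionRedundancy W x :=
  sum_nonneg fun _ _ ↦ sq_nonneg _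

theorem fusionRedundancy_le_card_mul (W : ι → Submodule 𝕜 E)
    [∀ i, (W i).HasOrthogonalProjection] (x : E) :
    fusionRedundancy W x ≤ Fintype.card ι * ‖x‖ ^ 2 := by
  calc fusionRedundancy W x ≤ ∑ _i : ι, ‖x‖ ^ 2 := by
        unfold fusionRedundancy
        gcongr with i
        simpa only [Submodule.norm_coe] using (W i).norm_orthogonalProjectionOnto_apply_le x
    _ = Fintype.card ι * ‖x‖ ^ 2 := by rw [sum_const, card_univ, nsmul_eq_mul]

theorem sqrt_fusionRedundancy_le_of_dist_le (W V : ι → Submodule 𝕜 E)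
    [∀ i, (W i).HasOrthogonalProjection] [∀ i, (V i).HasOrthogonalProjection] {μ : ℝ}
    (hμ : 0 ≤ μ)
    (hpert : ∀ i x, ‖((W i).orthogonalProjectionOnto x : E) - (V i).orthogonalProjectionOnto x‖
      ≤ μ * ‖x‖) (x : E) :
    √(fusionRedundancy V x) ≤ √(fusionRedundancy W x) + μ * ‖x‖ * √(Fintype.card ι) := by
  have hsplit := sqrt_sum_norm_add_sq_le (fun i ↦ ((W i).orthogonalProjectionOnto x : E))
    (fun i ↦ ((V i).orthogonalProjectionOnto x : E) - (W i).orthogonalProjectionOnto x)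
  have hdiff := sqrt_sum_norm_sq_le_of_norm_le
    (fun i ↦ ((V i).orthogonalProjectionOnto x : E) - (W i).orthogonalProjectionOnto x)
    (mul_nonneg hμ (norm_nonneg x)) fun i ↦ (norm_sub_rev _ _).trans_le (hpert i x)
  simp only [add_sub_cancel] at hsplit
  exact hsplit.trans (by unfold fusionRedundancy; gcongr)

end Redundancy

theorem upper_redundancy_of_perturbed_fusion_frame_general
    {H : Type*} [NormedAddCommGroup H] [InnerProductSpace ℂ H] [FiniteDimensional ℂ H]
    {N : ℕ} (W V : Fin N → Submodule ℂ H) (μ : ℝ)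
    (hμ : 0 < μ)
    (hpert : ∀ i, ∀ x : H,
      ‖(Submodule.orthogonalProjectionOnto (W i) x : H) - (Submodule.orthogonalProjectionOnto (V i) x : H)‖ ≤ μ * ‖x‖) :
    (⨆ x : {x : H // ‖x‖ = 1}, ∑ i, ‖(Submodule.orthogonalProjectionOnto (V i) (x : H) : H)‖ ^ 2) ≤
      (Real.sqrt (⨆ x : {x : H // ‖x‖ = 1},
          ∑ i, ‖(Submodule.orthogonalProjectionOnto (W i) (x : H) : H)‖ ^ 2) + μ * Real.sqrt N) ^ 2 := by
  change (⨆ x : {x : H // ‖x‖ = 1}, fusionRedundancy V (x : H)) ≤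
    (√(⨆ x : {x : H // ‖x‖ = 1}, fusionRedundancy W (x : H)) + μ * √N) ^ 2
  have hbdd : BddAbove (Set.range fun x : {x : H // ‖x‖ = 1} ↦ fusionRedundancy W (x : H)) := by
    refine ⟨N, ?_⟩
    rintro _ ⟨x, rfl⟩
    simpa [x.2] using fusionRedundancy_le_card_mul W (x : H)
  refine Real.iSup_le (fun x ↦ ?_) (sq_nonneg _)
  have hx := sqrt_fusionRedundancy_le_of_dist_le W V hμ.le hpert x
  rw [x.2, mul_one, Fintype.card_fin] at hx
  calc fusionRedundancy V (x : H) = √(fusionRedundancy V (x : H)) ^ 2 :=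
        (Real.sq_sqrt (fusionRedundancy_nonneg V _)).symm
    _ ≤ (√(fusionRedundancy W (x : H)) + μ * √N) ^ 2 := by gcongr
    _ ≤ _ := by gcongr; exact le_ciSup hbdd x

/-- If `W₁, …, W_N` is a fusion frame (weights all 1) for a
finite-dimensional complex Hilbert space `H` (`dim H ≥ 1`), and `V₁, …, V_N` are
closed subspaces with `‖P_{Wᵢ} x - P_{Vᵢ} x‖ ≤ μ‖x‖` for all `x` and `i`, where
`μ > 0`, then `R_V⁺ ≤ (√(R_W⁺) + μ√N)²`. -/
theorem upper_redundancy_of_perturbed_fusion_frame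
    {H : Type*} [NormedAddCommGroup H] [InnerProductSpace ℂ H] [FiniteDimensional ℂ H]
    (hdim : 1 ≤ Module.finrank ℂ H)
    {N : ℕ} (W V : Fin N → Submodule ℂ H) (μ : ℝ)
    (hframe : ∃ A B : ℝ, 0 < A ∧ A ≤ B ∧ ∀ x : H,
      A * ‖x‖ ^ 2 ≤ ∑ i, ‖(Submodule.orthogonalProjectionOnto (W i) x : H)‖ ^ 2 ∧
        ∑ i, ‖(Submodule.orthogonalProjectionOnto (W i) x : H)‖ ^ 2 ≤ B * ‖x‖ ^ 2)
    (hμ : 0 < μ)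
    (hpert : ∀ i, ∀ x : H,
      ‖(Submodule.orthogonalProjectionOnto (W i) x : H) - (Submodule.orthogonalProjectionOnto (V i) x : H)‖ ≤ μ * ‖x‖) :
    (⨆ x : {x : H // ‖x‖ = 1}, ∑ i, ‖(Submodule.orthogonalProjectionOnto (V i) (x : H) : H)‖ ^ 2) ≤
      (Real.sqrt (⨆ x : {x : H // ‖x‖ = 1},
          ∑ i, ‖(Submodule.orthogonalProjectionOnto (W i) (x : H) : H)‖ ^ 2) + μ * Real.sqrt N) ^ 2 :=
  upper_redundancy_of_perturbed_fusion_frame_general W V μ hμ hpert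
end

section
/- Let V and W be closed subspaces of a complex Hilbert space H with V ≠ {0}. Then the gap of V to W satisfies δ(V, W) = sin θ(V, W), where cos θ(V, W) = R(V, W); equivalently, sup_{x ∈ V, ‖x‖ = 1} dist(x, W) = (1 − (inf_{x ∈ V, ‖x‖ = 1} ‖P_W(x)‖)²)^{1/2}. -/
/-! The distance from a unit vector `x` to `W` is `‖x - P_W x‖ = √(1 - ‖P_W x‖²)` by Pythagoras,
and `t ↦ √(1 - t²)` is continuous and antitone on `[0, ∞)`, so it turns the infimum of `‖P_W x‖`
into the supremum of the distances. -/

open Metric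

namespace Submodule

variable {𝕜 E : Type*} [RCLike 𝕜] [NormedAddCommGroup E] [InnerProductSpace 𝕜 E]
  (K : Submodule 𝕜 E) [K.HasOrthogonalProjection]

theorem infDist_eq_norm_sub_starProjection (x : E) :
    infDist x K = ‖x - K.starProjection x‖ := by
  rw [starProjection_minimal, infDist_eq_iInf]
  simp only [dist_eq_norm]
  rfl

theorem infDist_eq_sqrt_sq_norm_sub_sq_norm_starProjection (x : E) :
    infDist x K = √(‖x‖ ^ 2 - ‖K.starProjection x‖ ^ 2) := by
  rw [infDist_eq_norm_sub_starProjection, ← starProjection_orthogonal_val,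
    K.norm_sq_eq_add_norm_sq_starProjection x, add_sub_cancel_left, Real.sqrt_sq (norm_nonneg _)]

end Submodule

theorem Real.iSup_sqrt_one_sub_sq {ι : Sort*} [Nonempty ι] {f : ι → ℝ} (hf : ∀ i, 0 ≤ f i) :
    ⨆ i, √(1 - f i ^ 2) = √(1 - (⨅ i, f i) ^ 2) := by
  -- clamping at `0` makes the map antitone on all of `ℝ` without changing it on the range of `f`
  set g : ℝ → ℝ := fun t ↦ √(1 - max t 0 ^ 2)
  have hg_anti : Antitone g := fun a b hab ↦ by
    have : max a 0 ≤ max b 0 := max_le_max hab le_rfl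
    have : 0 ≤ max a 0 := le_max_right _ _
    exact Real.sqrt_le_sqrt (by nlinarith)
  have hg_cont : Continuous g := by fun_prop
  have h := hg_anti.map_ciInf_of_continuousAt hg_cont.continuousAt ⟨0, by
    rintro _ ⟨i, rfl⟩
    exact hf i⟩
  simpa [g, max_eq_left (hf _), max_eq_left (le_ciInf hf)] using h.symm

theorem gap_eq_sin_of_infimum_cosine_angle_general
    {H : Type*} [NormedAddCommGroup H] [InnerProductSpace ℂ H]
    (V W : Submodule ℂ H) [W.HasOrthogonalProjection]
    (hVne : V ≠ ⊥) :
    (⨆ x : {x : H // x ∈ V ∧ ‖x‖ = 1}, Metric.infDist (x : H) (W : Set H)) =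
      Real.sqrt (1 -
        (⨅ x : {x : H // x ∈ V ∧ ‖x‖ = 1}, ‖(W.orthogonalProjectionOnto (x : H) : H)‖) ^ 2) := by
  obtain ⟨v, hvV, hv0⟩ := Submodule.exists_mem_ne_zero_of_ne_bot hVne
  have : Nonempty {x : H // x ∈ V ∧ ‖x‖ = 1} :=
    ⟨⟨(‖v‖⁻¹ : ℂ) • v, V.smul_mem _ hvV, norm_smul_inv_norm hv0⟩⟩
  have hdist (x : {x : H // x ∈ V ∧ ‖x‖ = 1}) :
      infDist (x : H) W = √(1 - ‖(W.orthogonalProjectionOnto (x : H) : H)‖ ^ 2) := by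
    rw [W.infDist_eq_sqrt_sq_norm_sub_sq_norm_starProjection, x.2.2, one_pow]
    rfl
  simp_rw [hdist]
  exact Real.iSup_sqrt_one_sub_sq fun _ ↦ norm_nonneg _

/-- For closed subspaces `V ≠ {0}` and `W` of a complex Hilbert
space `H`, the gap `δ(V, W) = sup_{x ∈ V, ‖x‖ = 1} dist(x, W)` satisfies
`δ(V, W) = sin θ(V, W)`, where `cos θ(V, W) = R(V, W) = inf_{x ∈ V, ‖x‖ = 1} ‖P_W x‖`;
that is, `δ(V, W) = (1 - R(V, W)²)^{1/2}`. -/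
theorem gap_eq_sin_of_infimum_cosine_angle
    {H : Type*} [NormedAddCommGroup H] [InnerProductSpace ℂ H] [CompleteSpace H]
    (V W : Submodule ℂ H) [W.HasOrthogonalProjection]
    (hV : IsClosed (V : Set H)) (hVne : V ≠ ⊥) :
    (⨆ x : {x : H // x ∈ V ∧ ‖x‖ = 1}, Metric.infDist (x : H) (W : Set H)) =
      Real.sqrt (1 -
        (⨅ x : {x : H // x ∈ V ∧ ‖x‖ = 1}, ‖(W.orthogonalProjectionOnto (x : H) : H)‖) ^ 2) :=
  gap_eq_sin_of_infimum_cosine_angle_general V W hVne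
end
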